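/- Combining the residual decomposition with the Gram perturbation bounds: if ‖Δ‖₂ ≤ ε, ‖G‖₂ ≤ √N·C, ‖g_tar‖₂ ≤ C, and ŵ lies in the ℓ¹-ball of radius k (so ‖ŵ‖₂ ≤ ‖ŵ‖₁ ≤ k), then the minimizers w*, ŵ of the corresponding quadratic programs over the ℓ¹-ball satisfy ‖ŵ − w*‖₂ ≤ (ε/μ)(2k√N·C + kε + C). -/

import Mathlib

/-!
Both minimizers satisfy the first-order optimality condition of a quadratic program over the
convex ℓ¹-ball: `0 ≤ ⟪K w* - β, ŵ - w*⟫` and `0 ≤ ⟪K̂ ŵ - β̂, w* - ŵ⟫`. Adding them and using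
`λ_min(K) ≥ μ` gives `μ ‖ŵ - w*‖² ≤ ⟪r, ŵ - w*⟫` for the residual `r = (K - K̂) ŵ + (β̂ - β)`,
hence `‖ŵ - w*‖ ≤ ‖r‖ / μ`. Finally `K̂ - K = G Δᵀ + Δ Ĝᵀ` and `‖Ĝ‖ ≤ ‖G‖ + ε` bound
`‖r‖ ≤ ε ((2 ‖G‖ + ε) ‖ŵ‖ + ‖g_tar‖)`.
-/

open Matrix BigOperators

noncomputable def enorm2 {n : ℕ} (v : Fin n → ℝ) : ℝ := Real.sqrt (∑ i, v i ^ 2)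

noncomputable def specNorm {m n : ℕ} (A : Matrix (Fin m) (Fin n) ℝ) : ℝ :=
  ‖LinearMap.toContinuousLinearMap (Matrix.toEuclideanLin A)‖

noncomputable def l1norm {n : ℕ} (v : Fin n → ℝ) : ℝ := ∑ i, |v i|

open Filter Topology

lemma isSymm_mul_transpose_self' {α : Type*} [NonUnitalCommSemiring α] {m n : Type*} [Fintype n]
    (A : Matrix m n α) : (A * Aᵀ).IsSymm :=
  transpose_mul _ _

section QuadraticProgram

variable {ι : Type*} [Fintype ι]

noncomputable def quadObjective (K : Matrix ι ι ℝ) (β w : ι → ℝ) : ℝ :=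
  1 / 2 * (w ⬝ᵥ K *ᵥ w) - β ⬝ᵥ w

lemma quadObjective_add_smul {K : Matrix ι ι ℝ} (hK : K.IsSymm) (β w d : ι → ℝ) (t : ℝ) :
    quadObjective K β (w + t • d) =
      quadObjective K β w + t * ((K *ᵥ w - β) ⬝ᵥ d) + t ^ 2 / 2 * (d ⬝ᵥ K *ᵥ d) := by
  have hcross : w ⬝ᵥ K *ᵥ d = d ⬝ᵥ K *ᵥ w := by
    rw [dotProduct_mulVec, ← mulVec_transpose, hK.eq, dotProduct_comm]
  simp only [quadObjective, mulVec_add, mulVec_smul, dotProduct_add, add_dotProduct,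
    dotProduct_smul, smul_dotProduct, smul_eq_mul, dotProduct_comm _ d, dotProduct_sub]
  linear_combination t / 2 * hcross

lemma nonneg_of_forall_nonneg_add_mul {a b : ℝ} (h : ∀ t : ℝ, 0 < t → t ≤ 1 → 0 ≤ a + t * b) :
    0 ≤ a := by
  have hlim : Tendsto (fun t : ℝ => a + t * b) (𝓝[>] 0) (𝓝 a) := by
    have hcont : Continuous fun t : ℝ => a + t * b := by fun_prop
    simpa using (hcont.tendsto 0).mono_left nhdsWithin_le_nhds
  refine ge_of_tendsto hlim ?_
  filter_upwards [Ioc_mem_nhdsGT one_pos] with t ht using h t ht.1 ht.2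

theorem IsMinOn.quadObjective_first_order {K : Matrix ι ι ℝ} (hK : K.IsSymm) {β w u : ι → ℝ}
    {S : Set (ι → ℝ)} (hS : Convex ℝ S) (hmin : IsMinOn (quadObjective K β) S w)
    (hw : w ∈ S) (hu : u ∈ S) :
    0 ≤ (K *ᵥ w - β) ⬝ᵥ (u - w) := by
  refine nonneg_of_forall_nonneg_add_mul (b := (u - w) ⬝ᵥ K *ᵥ (u - w) / 2) fun t ht0 ht1 => ?_
  have hle := isMinOn_iff.1 hmin _ (hS.add_smul_sub_mem hw hu ⟨ht0.le, ht1⟩)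
  rw [quadObjective_add_smul hK] at hle
  nlinarith

lemma dotProduct_mulVec_sub_le_residual {K K' : Matrix ι ι ℝ} {β β' w w' : ι → ℝ}
    (h : 0 ≤ (K *ᵥ w - β) ⬝ᵥ (w' - w)) (h' : 0 ≤ (K' *ᵥ w' - β') ⬝ᵥ (w - w')) :
    (w' - w) ⬝ᵥ K *ᵥ (w' - w) ≤ ((K - K') *ᵥ w' + (β' - β)) ⬝ᵥ (w' - w) := by
  rw [← neg_sub w', dotProduct_neg] at h'
  rw [dotProduct_comm (w' - w)]
  simp only [mulVec_sub, sub_mulVec, add_dotProduct, sub_dotProduct] at h h' ⊢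
  linarith

end QuadraticProgram

lemma convex_setOf_l1norm_le (n : ℕ) (k : ℝ) : Convex ℝ {v : Fin n → ℝ | l1norm v ≤ k} := by
  have hball : {v : Fin n → ℝ | l1norm v ≤ k} =
      (WithLp.linearEquiv 1 ℝ (Fin n → ℝ)).symm ⁻¹' Metric.closedBall 0 k := by
    ext v
    simp [l1norm, PiLp.norm_eq_of_L1]
  rw [hball]
  exact (convex_closedBall _ _).linear_preimage
    (WithLp.linearEquiv 1 ℝ (Fin n → ℝ)).symm.toLinearMap

section Norms

open scoped Matrix.Norms.L2Operator

variable {m n : ℕ}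

lemma enorm2_eq_norm (v : Fin n → ℝ) : enorm2 v = ‖WithLp.toLp 2 v‖ := by
  simp [enorm2, EuclideanSpace.norm_eq]

lemma specNorm_eq_l2_opNorm (A : Matrix (Fin m) (Fin n) ℝ) : specNorm A = ‖A‖ := rfl

lemma enorm2_nonneg (v : Fin n → ℝ) : 0 ≤ enorm2 v := Real.sqrt_nonneg _

lemma enorm2_add_le (u v : Fin n → ℝ) : enorm2 (u + v) ≤ enorm2 u + enorm2 v := by
  simpa only [enorm2_eq_norm, WithLp.toLp_add] using norm_add_le _ _

lemma enorm2_mulVec_le (A : Matrix (Fin m) (Fin n) ℝ) (v : Fin n → ℝ) :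
    enorm2 (A *ᵥ v) ≤ ‖A‖ * enorm2 v := by
  simpa [enorm2_eq_norm] using A.l2_opNorm_mulVec (WithLp.toLp 2 v)

lemma dotProduct_le_enorm2_mul (u v : Fin n → ℝ) : u ⬝ᵥ v ≤ enorm2 u * enorm2 v := by
  simpa [enorm2_eq_norm, EuclideanSpace.inner_eq_star_dotProduct, dotProduct_comm]
    using real_inner_le_norm (WithLp.toLp 2 u) (WithLp.toLp 2 v)

lemma enorm2_le_l1norm (v : Fin n → ℝ) : enorm2 v ≤ l1norm v := by
  have hsq : ∑ i, v i ^ 2 ≤ (∑ i, |v i|) ^ 2 := by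
    simpa only [sq_abs] using
      Finset.sum_sq_le_sq_sum_of_nonneg (fun i _ => abs_nonneg (v i))
  exact (Real.sqrt_le_sqrt hsq).trans_eq (Real.sqrt_sq (by positivity))

lemma l2_opNorm_transpose (A : Matrix (Fin m) (Fin n) ℝ) : ‖Aᵀ‖ = ‖A‖ := by
  rw [← conjTranspose_eq_transpose_of_trivial, l2_opNorm_conjTranspose]

lemma l2_opNorm_mul_transpose_sub_le (A B : Matrix (Fin m) (Fin n) ℝ) :
    ‖B * Bᵀ - A * Aᵀ‖ ≤ ‖B - A‖ * (‖A‖ + ‖B‖) := by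
  have hsplit : B * Bᵀ - A * Aᵀ = A * (B - A)ᵀ + (B - A) * Bᵀ := by
    simp only [transpose_sub, Matrix.mul_sub, Matrix.sub_mul]
    abel
  calc ‖B * Bᵀ - A * Aᵀ‖ ≤ ‖A‖ * ‖(B - A)ᵀ‖ + ‖B - A‖ * ‖Bᵀ‖ := by
        rw [hsplit]
        exact (norm_add_le _ _).trans (add_le_add (l2_opNorm_mul _ _) (l2_opNorm_mul _ _))
    _ = ‖B - A‖ * (‖A‖ + ‖B‖) := by
        rw [l2_opNorm_transpose, l2_opNorm_transpose]
        ring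

theorem enorm2_sub_le_of_first_order {μ : ℝ} (hμ : 0 < μ) {K K' : Matrix (Fin n) (Fin n) ℝ}
    (hK : ∀ v, μ * enorm2 v ^ 2 ≤ v ⬝ᵥ K *ᵥ v) {β β' w w' : Fin n → ℝ}
    (h : 0 ≤ (K *ᵥ w - β) ⬝ᵥ (w' - w)) (h' : 0 ≤ (K' *ᵥ w' - β') ⬝ᵥ (w - w')) :
    enorm2 (w' - w) ≤ enorm2 ((K - K') *ᵥ w' + (β' - β)) / μ := by
  set e := w' - w
  set r := (K - K') *ᵥ w' + (β' - β)
  have hsq : μ * enorm2 e ^ 2 ≤ enorm2 r * enorm2 e :=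
    calc μ * enorm2 e ^ 2 ≤ e ⬝ᵥ K *ᵥ e := hK e
      _ ≤ r ⬝ᵥ e := dotProduct_mulVec_sub_le_residual h h'
      _ ≤ enorm2 r * enorm2 e := dotProduct_le_enorm2_mul r e
  rw [le_div_iff₀ hμ]
  rcases (enorm2_nonneg e).eq_or_lt with he | he
  · rw [← he]
    simpa using enorm2_nonneg r
  · nlinarith

lemma enorm2_gram_residual_le {G G' : Matrix (Fin m) (Fin n) ℝ} {g : Fin n → ℝ}
    {w : Fin m → ℝ} {ε a b c : ℝ} (hΔ : ‖G' - G‖ ≤ ε) (hG : ‖G‖ ≤ a) (hw : enorm2 w ≤ b)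
    (hg : enorm2 g ≤ c) :
    enorm2 ((G * Gᵀ - G' * G'ᵀ) *ᵥ w + (G' *ᵥ g - G *ᵥ g)) ≤ ε * ((2 * a + ε) * b + c) := by
  have hG' : ‖G'‖ ≤ a + ε := (norm_le_norm_add_norm_sub' G' G).trans (add_le_add hG hΔ)
  have hw0 := enorm2_nonneg w
  have hg0 := enorm2_nonneg g
  calc _ ≤ ‖G' * G'ᵀ - G * Gᵀ‖ * enorm2 w + ‖G' - G‖ * enorm2 g := by
        rw [← sub_mulVec, ← norm_neg, neg_sub]
        exact (enorm2_add_le _ _).trans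
          (add_le_add (enorm2_mulVec_le _ _) (enorm2_mulVec_le _ _))
    _ ≤ ‖G' - G‖ * (‖G‖ + ‖G'‖) * enorm2 w + ‖G' - G‖ * enorm2 g := by
        gcongr
        exact l2_opNorm_mul_transpose_sub_le G G'
    _ = ‖G' - G‖ * ((‖G‖ + ‖G'‖) * enorm2 w + enorm2 g) := by ring
    _ ≤ ε * ((2 * a + ε) * b + c) := by
        have hsum : ‖G‖ + ‖G'‖ ≤ 2 * a + ε := by linarith
        have hsum0 : 0 ≤ ‖G‖ + ‖G'‖ := by positivity
        gcongr ?_ * (?_ * ?_ + ?_)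
        · exact (norm_nonneg _).trans hΔ
        · exact hsum0.trans hsum

end Norms

theorem stmt6_general (N d : ℕ) (μ C k ε : ℝ) (hμ : 0 < μ)
    (G Ghat : Matrix (Fin N) (Fin d) ℝ) (gtar : Fin d → ℝ)
    (hmin : ∀ w : Fin N → ℝ, μ * (enorm2 w) ^ 2 ≤ w ⬝ᵥ (G * Gᵀ).mulVec w)
    (hΔ : specNorm (Ghat - G) ≤ ε)
    (hG : specNorm G ≤ Real.sqrt N * C)
    (hgtar : enorm2 gtar ≤ C)
    (wstar what : Fin N → ℝ)
    (hwstar : l1norm wstar ≤ k) (hwhat : l1norm what ≤ k)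
    (hopt : ∀ v : Fin N → ℝ, l1norm v ≤ k →
      (1 / 2) * (wstar ⬝ᵥ (G * Gᵀ).mulVec wstar) - (G.mulVec gtar) ⬝ᵥ wstar ≤
        (1 / 2) * (v ⬝ᵥ (G * Gᵀ).mulVec v) - (G.mulVec gtar) ⬝ᵥ v)
    (hopthat : ∀ v : Fin N → ℝ, l1norm v ≤ k →
      (1 / 2) * (what ⬝ᵥ (Ghat * Ghatᵀ).mulVec what) - (Ghat.mulVec gtar) ⬝ᵥ what ≤
        (1 / 2) * (v ⬝ᵥ (Ghat * Ghatᵀ).mulVec v) - (Ghat.mulVec gtar) ⬝ᵥ v) :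
    enorm2 (what - wstar) ≤
      (ε / μ) * (2 * k * Real.sqrt N * C + k * ε + C) := by
  rw [specNorm_eq_l2_opNorm] at hΔ hG
  have hball := convex_setOf_l1norm_le N k
  have hfo := (isMinOn_iff.2 hopt).quadObjective_first_order (isSymm_mul_transpose_self' G)
    hball hwstar hwhat
  have hfohat := (isMinOn_iff.2 hopthat).quadObjective_first_order
    (isSymm_mul_transpose_self' Ghat) hball hwhat hwstar
  calc enorm2 (what - wstar)
      ≤ enorm2 ((G * Gᵀ - Ghat * Ghatᵀ) *ᵥ what + (Ghat *ᵥ gtar - G *ᵥ gtar)) / μ :=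
        enorm2_sub_le_of_first_order hμ hmin hfo hfohat
    _ ≤ ε * ((2 * (Real.sqrt N * C) + ε) * k + C) / μ := by
        gcongr
        exact enorm2_gram_residual_le hΔ hG ((enorm2_le_l1norm what).trans hwhat) hgtar
    _ = (ε / μ) * (2 * k * Real.sqrt N * C + k * ε + C) := by ring

/-- High-probability stability bound (deterministic core):
‖ŵ − w*‖₂ ≤ (ε/μ)(2k√N·C + kε + C). -/
theorem stmt6 (N d : ℕ) (μ C k ε : ℝ) (hμ : 0 < μ) (hC : 0 < C) (hk : 0 ≤ k)
    (G Ghat : Matrix (Fin N) (Fin d) ℝ) (gtar : Fin d → ℝ)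
    (hmin : ∀ w : Fin N → ℝ, μ * (enorm2 w) ^ 2 ≤ w ⬝ᵥ (G * Gᵀ).mulVec w)
    (hΔ : specNorm (Ghat - G) ≤ ε)
    (hG : specNorm G ≤ Real.sqrt N * C)
    (hgtar : enorm2 gtar ≤ C)
    (wstar what : Fin N → ℝ)
    (hwstar : l1norm wstar ≤ k) (hwhat : l1norm what ≤ k)
    (hopt : ∀ v : Fin N → ℝ, l1norm v ≤ k →
      (1 / 2) * (wstar ⬝ᵥ (G * Gᵀ).mulVec wstar) - (G.mulVec gtar) ⬝ᵥ wstar ≤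
        (1 / 2) * (v ⬝ᵥ (G * Gᵀ).mulVec v) - (G.mulVec gtar) ⬝ᵥ v)
    (hopthat : ∀ v : Fin N → ℝ, l1norm v ≤ k →
      (1 / 2) * (what ⬝ᵥ (Ghat * Ghatᵀ).mulVec what) - (Ghat.mulVec gtar) ⬝ᵥ what ≤
        (1 / 2) * (v ⬝ᵥ (Ghat * Ghatᵀ).mulVec v) - (Ghat.mulVec gtar) ⬝ᵥ v) :
    enorm2 (what - wstar) ≤
      (ε / μ) * (2 * k * Real.sqrt N * C + k * ε + C) :=
  stmt6_general N d μ C k ε hμ G Ghat gtar hmin hΔ hG hgtar wstar what hwstar hwhat hopt hopthat
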